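/- arXiv:2509.25425 — 2 statements merged into one kernel-verified Lean document; each statement's English description precedes it below -/
import Mathlib

section
/- For every n ≥ 1, each column of the matrix B_n contains exactly k + (2^n − 2)·t ones; equivalently, J · B_n = (k + (2^n − 2)t) · J (of the appropriate rectangular sizes). -/
open Matrix Kronecker

def Jmat (m l : ℕ) : Matrix (Fin m) (Fin l) ℤ := Matrix.of fun _ _ => 1
def Kmat (m : ℕ) : Matrix (Fin m) (Fin m) ℤ :=
  Matrix.of fun i j => if (j : ℕ) = m - 1 - (i : ℕ) then 1 else 0
def kron {m n p q : ℕ} (A : Matrix (Fin m) (Fin n) ℤ) (B : Matrix (Fin p) (Fin q) ℤ) :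
    Matrix (Fin (m * p)) (Fin (n * q)) ℤ :=
  Matrix.reindex finProdFinEquiv finProdFinEquiv (A ⊗ₖ B)
def castM {m n m' n' : ℕ} (hm : m = m') (hn : n = n') (A : Matrix (Fin m) (Fin n) ℤ) :
    Matrix (Fin m') (Fin n') ℤ :=
  Matrix.reindex (finCongr hm) (finCongr hn) A
def alphaM {m l : ℕ} (s : ℕ) (X : Matrix (Fin m) (Fin l) ℤ) :
    Matrix (Fin (m / s)) (Fin l) ℤ :=
  Matrix.of fun i j => X (Fin.castLE (Nat.div_le_self m s) i) j
def vstack {m₁ m₂ l : ℕ} (X : Matrix (Fin m₁) (Fin l) ℤ) (Y : Matrix (Fin m₂) (Fin l) ℤ) :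
    Matrix (Fin (m₁ + m₂)) (Fin l) ℤ :=
  Matrix.reindex finSumFinEquiv (Equiv.refl _) (Matrix.fromRows X Y)
def hstack {m l₁ l₂ : ℕ} (X : Matrix (Fin m) (Fin l₁) ℤ) (Y : Matrix (Fin m) (Fin l₂) ℤ) :
    Matrix (Fin m) (Fin (l₁ + l₂)) ℤ :=
  Matrix.reindex (Equiv.refl _) finSumFinEquiv (Matrix.fromCols X Y)
def block2 {a b c d : ℕ} (A : Matrix (Fin a) (Fin c) ℤ) (B : Matrix (Fin a) (Fin d) ℤ)
    (C : Matrix (Fin b) (Fin c) ℤ) (D : Matrix (Fin b) (Fin d) ℤ) :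
    Matrix (Fin (a + b)) (Fin (c + d)) ℤ :=
  Matrix.reindex finSumFinEquiv finSumFinEquiv (Matrix.fromBlocks A B C D)
lemma four_pow_eq (n : ℕ) : (4 : ℕ) ^ n = 2 ^ n * 2 ^ n := by
  rw [show (4 : ℕ) = 2 * 2 from rfl, mul_pow]
lemma t_four_pow_div (t n : ℕ) : t * 4 ^ n / 2 ^ n = t * 2 ^ n := by
  rw [four_pow_eq, ← mul_assoc, Nat.mul_div_cancel _ (by positivity)]
def vnum (v t n : ℕ) : ℕ := (v + (2 ^ (n + 1) - 4) * t) * 2 ^ (n - 1)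
lemma vnum_one (v t : ℕ) : vnum v t 1 = v := by norm_num [vnum]
lemma vnum_succ (v t n : ℕ) :
    vnum v t (n + 2) = 2 * vnum v t (n + 1) + 2 * (t * 4 ^ (n + 1)) := by
  unfold vnum
  simp only [show n + 2 + 1 = n + 3 from rfl, show n + 2 - 1 = n + 1 from rfl,
    show n + 1 + 1 = n + 2 from rfl, show n + 1 - 1 = n from rfl]
  have h2 : (4 : ℕ) ≤ 2 ^ (n + 2) := by
    calc (4 : ℕ) = 2 ^ 2 := rfl
    _ ≤ 2 ^ (n + 2) := Nat.pow_le_pow_right (by norm_num) (by omega)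
  have h3 : (4 : ℕ) ≤ 2 ^ (n + 3) := le_trans h2 (Nat.pow_le_pow_right (by norm_num) (by omega))
  rw [four_pow_eq]
  zify [h2, h3]
  ring
def Pmat (t n : ℕ) : Matrix (Fin (t * 4 ^ n)) (Fin (t * 4 ^ n)) ℤ :=
  castM (by rw [four_pow_eq]; ring) (by rw [four_pow_eq]; ring)
    (kron (kron (Jmat (2 ^ n) 1) (Kmat (2 ^ n))) (Jmat t (t * 2 ^ n)))
def Pone (t : ℕ) : Matrix (Fin (4 * t)) (Fin (4 * t)) ℤ :=
  castM (by ring) (by ring) (kron (kron (Jmat 2 1) (Kmat 2)) (Jmat t (2 * t)))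

/-- The recursively defined sequence `P'_n` of Lemma 2. -/
def P'mat (t : ℕ) : (n : ℕ) → Matrix (Fin (t * 4 ^ n)) (Fin (t * 4 ^ n)) ℤ
  | 0 => 0
  | 1 => castM (by ring) (by ring) (kron (kron (Jmat 2 1) (Kmat 2)) (Jmat t (2 * t)))
  | (n + 2) =>
      castM
        (by rw [t_four_pow_div, four_pow_eq]; ring)
        (by ring)
        (kron (kron (kron (Jmat (2 ^ (n + 2)) 1) (Kmat 2))
          (alphaM (2 ^ (n + 1)) (P'mat t (n + 1)))) (Jmat 1 2))

/-- The recursively defined sequence `B_n` (with `B_1` given). -/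
def Bmat (t v : ℕ) (B₁ : Matrix (Fin v) (Fin (4 * t)) ℤ) :
    (n : ℕ) → Matrix (Fin (vnum v t n)) (Fin (t * 4 ^ n)) ℤ
  | 0 => 0
  | 1 => castM (vnum_one v t).symm (by ring) B₁
  | (n + 2) =>
      castM (by rw [vnum_succ]; try ring) (by ring)
        (vstack (kron (kron (Kmat 2) (Bmat t v B₁ (n + 1))) (Jmat 1 2))
          (kron (kron (1 : Matrix (Fin 2) (Fin 2) ℤ) (Pmat t (n + 1))) (Jmat 1 2)))

/-- The recursively defined sequence `C_n` (with `C_1` given). -/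
def Cmat (t v : ℕ) (C₁ : Matrix (Fin (4 * t)) (Fin v) ℤ) :
    (n : ℕ) → Matrix (Fin (t * 4 ^ n)) (Fin (vnum v t n)) ℤ
  | 0 => 0
  | 1 => castM (by ring) (vnum_one v t).symm C₁
  | (n + 2) =>
      castM (by rw [t_four_pow_div, four_pow_eq]; ring) (by rw [vnum_succ]; try ring)
        (hstack
          (kron (kron (Jmat (2 ^ (n + 2)) 1) (1 : Matrix (Fin 2) (Fin 2) ℤ))
            (alphaM (2 ^ (n + 1)) (Cmat t v C₁ (n + 1))))
          (kron (kron (Jmat (2 ^ (n + 2)) 1) (1 : Matrix (Fin 2) (Fin 2) ℤ))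
            (alphaM (2 ^ (n + 1)) (Pmat t (n + 1)))))

/-- The recursively defined sequence `A_n` (with `A_1`, `B_1`, `C_1` given). -/
def Amat (t v : ℕ) (A₁ : Matrix (Fin v) (Fin v) ℤ) (B₁ : Matrix (Fin v) (Fin (4 * t)) ℤ)
    (C₁ : Matrix (Fin (4 * t)) (Fin v) ℤ) :
    (n : ℕ) → Matrix (Fin (vnum v t n)) (Fin (vnum v t n)) ℤ
  | 0 => 0
  | 1 => castM (vnum_one v t).symm (vnum_one v t).symm A₁
  | (n + 2) =>
      castM (by rw [vnum_succ]) (by rw [vnum_succ])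
        (block2 (kron (1 : Matrix (Fin 2) (Fin 2) ℤ) (Amat t v A₁ B₁ C₁ (n + 1)))
          (kron (1 : Matrix (Fin 2) (Fin 2) ℤ) (Bmat t v B₁ (n + 1)))
          (kron (Kmat 2) (Cmat t v C₁ (n + 1)))
          (kron (Kmat 2) (Pmat t (n + 1))))

/-! Column sums multiply under Kronecker products, add up under vertical stacking and are
unchanged by reindexing. `K₂`, `I₂` and `J_{1,2}` have column sum `1` and `P_n` has column sum
`2ⁿ t`, so the column sum `c_n` of `B_n` satisfies `c₁ = k` and `c_{n+1} = c_n + 2ⁿ t`. -/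

section ColSum

variable {l m m' n n' α : Type*} [Fintype m]

def HasColSum [AddCommMonoid α] (X : Matrix m n α) (c : α) : Prop :=
  ∀ j, ∑ i, X i j = c

theorem HasColSum.reindex [AddCommMonoid α] [Fintype m'] {X : Matrix m n α} {c : α}
    (hX : HasColSum X c) (e : m ≃ m') (f : n ≃ n') : HasColSum (Matrix.reindex e f X) c := by
  intro j
  simpa [Matrix.reindex_apply, Matrix.submatrix_apply] using
    (Equiv.sum_comp e.symm (fun i => X i (f.symm j))).trans (hX (f.symm j))

theorem HasColSum.fromRows [AddCommMonoid α] [Fintype l] {X : Matrix m n α}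
    {Y : Matrix l n α} {a b : α} (hX : HasColSum X a) (hY : HasColSum Y b) :
    HasColSum (Matrix.fromRows X Y) (a + b) := by
  intro j
  simp only [Fintype.sum_sum_type, Matrix.fromRows_apply_inl, Matrix.fromRows_apply_inr,
    hX j, hY j]

theorem HasColSum.kronecker [NonUnitalNonAssocSemiring α] [Fintype m'] {A : Matrix m n α}
    {B : Matrix m' n' α} {a b : α} (hA : HasColSum A a) (hB : HasColSum B b) :
    HasColSum (A ⊗ₖ B) (a * b) := by
  rintro ⟨j, j'⟩
  simp only [Fintype.sum_prod_type, Matrix.kroneckerMap_apply, ← Finset.sum_mul_sum, hA j, hB j']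

theorem hasColSum_one [NonAssocSemiring α] [DecidableEq m] :
    HasColSum (1 : Matrix m m α) 1 := by
  intro j
  simp [Matrix.one_apply]

end ColSum

theorem HasColSum.kron {m n p q : ℕ} {A : Matrix (Fin m) (Fin n) ℤ}
    {B : Matrix (Fin p) (Fin q) ℤ} {a b : ℤ} (hA : HasColSum A a) (hB : HasColSum B b) :
    HasColSum (kron A B) (a * b) :=
  (hA.kronecker hB).reindex _ _

theorem HasColSum.castM {m n m' n' : ℕ} (hm : m = m') (hn : n = n')
    {X : Matrix (Fin m) (Fin n) ℤ} {c : ℤ} (hX : HasColSum X c) :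
    HasColSum (castM hm hn X) c :=
  hX.reindex _ _

theorem HasColSum.vstack {m₁ m₂ l : ℕ} {X : Matrix (Fin m₁) (Fin l) ℤ}
    {Y : Matrix (Fin m₂) (Fin l) ℤ} {a b : ℤ} (hX : HasColSum X a) (hY : HasColSum Y b) :
    HasColSum (vstack X Y) (a + b) :=
  (hX.fromRows hY).reindex _ _

theorem hasColSum_Jmat (m l : ℕ) : HasColSum (Jmat m l) m := by
  intro j
  simp [Jmat]

theorem Kmat_apply {m : ℕ} (i j : Fin m) : Kmat m i j = if i = j.rev then 1 else 0 := by
  simp only [Kmat, Matrix.of_apply, Fin.ext_iff, Fin.val_rev]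
  congr 1
  apply propext
  omega

theorem hasColSum_Kmat (m : ℕ) [NeZero m] : HasColSum (Kmat m) 1 := by
  intro j
  simp [Kmat_apply]

theorem hasColSum_Pmat (t n : ℕ) : HasColSum (Pmat t n) (2 ^ n * t) := by
  have h := ((hasColSum_Jmat (2 ^ n) 1).kron (hasColSum_Kmat (2 ^ n))).kron
    (hasColSum_Jmat t (t * 2 ^ n))
  rw [Pmat]
  convert h.castM _ _ using 1
  push_cast
  ring

theorem hasColSum_of_Jmat_mul {m l : ℕ} (hm : 0 < m) {X : Matrix (Fin m) (Fin l) ℤ} {c : ℤ}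
    (h : Jmat m m * X = c • Jmat m l) : HasColSum X c := by
  intro j
  simpa [Matrix.mul_apply, Jmat] using congrFun (congrFun h ⟨0, hm⟩) j

theorem Jmat_mul_of_hasColSum {m l : ℕ} {X : Matrix (Fin m) (Fin l) ℤ} {c : ℤ}
    (h : HasColSum X c) : Jmat m m * X = c • Jmat m l := by
  ext i j
  simpa [Matrix.mul_apply, Jmat] using h j

theorem hasColSum_Bmat {t v : ℕ} {B₁ : Matrix (Fin v) (Fin (4 * t)) ℤ} {c : ℤ}
    (hB₁ : HasColSum B₁ c) (n : ℕ) :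
    HasColSum (Bmat t v B₁ (n + 1)) (c + (2 ^ (n + 1) - 2) * t) := by
  induction n with
  | zero =>
    rw [Bmat]
    convert hB₁.castM _ _ using 1
    ring
  | succ n ih =>
    have top := ((hasColSum_Kmat 2).kron ih).kron (hasColSum_Jmat 1 2)
    have bottom :=
      ((hasColSum_one (m := Fin 2)).kron (hasColSum_Pmat t (n + 1))).kron (hasColSum_Jmat 1 2)
    rw [Bmat]
    convert (top.vstack bottom).castM _ _ using 1
    push_cast
    ring

theorem Bmat_col_sum_general
    (t v k : ℕ) (hv : 0 < v)
    (B₁ : Matrix (Fin v) (Fin (4 * t)) ℤ)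
    (hJB : Jmat v v * B₁ = (k : ℤ) • Jmat v (4 * t))
    (n : ℕ) (hn : 1 ≤ n) :
    Jmat (vnum v t n) (vnum v t n) * Bmat t v B₁ n =
      ((k : ℤ) + ((2 : ℤ) ^ n - 2) * t) • Jmat (vnum v t n) (t * 4 ^ n) := by
  obtain ⟨n, rfl⟩ := Nat.exists_eq_add_of_le' hn
  exact Jmat_mul_of_hasColSum (hasColSum_Bmat (hasColSum_of_Jmat_mul hv hJB) n)

/-- Lemma 3(2): each column of `B_n` contains exactly `k + (2^n − 2)t` ones. -/
theorem Bmat_col_sum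
    (t v k : ℕ) (ht : 0 < t) (hv : 0 < v) (hk : 0 < k)
    (B₁ : Matrix (Fin v) (Fin (4 * t)) ℤ) (C₁ : Matrix (Fin (4 * t)) (Fin v) ℤ)
    (hB01 : ∀ i j, B₁ i j = 0 ∨ B₁ i j = 1) (hC01 : ∀ i j, C₁ i j = 0 ∨ C₁ i j = 1)
    (hBJ : B₁ * Jmat (4 * t) (4 * t) = (2 * (t : ℤ)) • Jmat v (4 * t))
    (hJB : Jmat v v * B₁ = (k : ℤ) • Jmat v (4 * t))
    (hCJ : C₁ * Jmat v v = (k : ℤ) • Jmat (4 * t) v)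
    (hJC : Jmat (4 * t) (4 * t) * C₁ = (2 * (t : ℤ)) • Jmat (4 * t) v)
    (n : ℕ) (hn : 1 ≤ n) :
    Jmat (vnum v t n) (vnum v t n) * Bmat t v B₁ n =
      ((k : ℤ) + ((2 : ℤ) ^ n - 2) * t) • Jmat (vnum v t n) (t * 4 ^ n) :=
  Bmat_col_sum_general t v k hv B₁ hJB n hn
end

section
/- For every n ≥ 1, B_n · P_n = t · J_{v_n, t·4^n}, where v_n := (v+(2^{n+1}−4)t)·2^{n−1}. -/
open Matrix Kronecker

/-! Every row of `B_n` is the indicator of one of the aligned blocks of `t·2^n` consecutive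
columns. This holds for `B_1` by blockiness and for every row of `P_n`, and it survives
`K_2 ⊗ · ⊗ J_{1,2}` and `I_2 ⊗ · ⊗ J_{1,2}`: the block length doubles, and the shift by half the
width is a multiple of it. Column `y` of `P_n` is the indicator of the columns `x` with
`⌊x/t⌋ ≡ 2^n − 1 − ⌊y/(t·2^n)⌋ (mod 2^n)`, and every aligned block of `t·2^n` columns contains
exactly `t` of those. -/

theorem kron_apply {m n p q : ℕ} (A : Matrix (Fin m) (Fin n) ℤ) (B : Matrix (Fin p) (Fin q) ℤ)
    (x : Fin (m * p)) (y : Fin (n * q)) :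
    kron A B x y = A x.divNat y.divNat * B x.modNat y.modNat := rfl

theorem vstack_castAdd {m₁ m₂ l : ℕ} (X : Matrix (Fin m₁) (Fin l) ℤ)
    (Y : Matrix (Fin m₂) (Fin l) ℤ) (i : Fin m₁) : vstack X Y (Fin.castAdd m₂ i) = X i := by
  ext j; simp [vstack]

theorem vstack_natAdd {m₁ m₂ l : ℕ} (X : Matrix (Fin m₁) (Fin l) ℤ)
    (Y : Matrix (Fin m₂) (Fin l) ℤ) (i : Fin m₂) : vstack X Y (Fin.natAdd m₁ i) = Y i := by
  ext j; simp [vstack]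

def HasBlockRows (L : ℕ) {r N : ℕ} (M : Matrix (Fin r) (Fin N) ℤ) : Prop :=
  ∀ i, ∃ c < N / L, ∀ x : Fin N, M i x = if (x : ℕ) / L = c then 1 else 0

namespace HasBlockRows

variable {L r N : ℕ}

theorem castM {r' N' : ℕ} {A : Matrix (Fin r) (Fin N) ℤ} (hA : HasBlockRows L A)
    (hr : r = r') (hN : N = N') : HasBlockRows L (castM hr hN A) := by
  subst hr hN
  simpa [_root_.castM] using hA

theorem vstack {r' : ℕ} {A : Matrix (Fin r) (Fin N) ℤ} {B : Matrix (Fin r') (Fin N) ℤ}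
    (hA : HasBlockRows L A) (hB : HasBlockRows L B) : HasBlockRows L (vstack A B) := by
  intro i
  induction i using Fin.addCases with
  | left i => simpa only [vstack_castAdd] using hA i
  | right i => simpa only [vstack_natAdd] using hB i

theorem kron_Jmat {A : Matrix (Fin r) (Fin N) ℤ} (hA : HasBlockRows L A) (m : ℕ) {q : ℕ}
    (hq : 0 < q) : HasBlockRows (L * q) (kron A (Jmat m q)) := by
  intro i
  obtain ⟨c, hc, hrow⟩ := hA i.divNat
  refine ⟨c, by rwa [Nat.mul_div_mul_right _ _ hq], fun y => ?_⟩
  rw [kron_apply, hrow, Jmat, Matrix.of_apply, mul_one, Fin.coe_divNat, Nat.div_div_eq_div_mul,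
    Nat.mul_comm q]

theorem kron {p r' : ℕ} {S : Matrix (Fin r') (Fin p) ℤ} {A : Matrix (Fin r) (Fin N) ℤ}
    (hS : HasBlockRows 1 S) (hA : HasBlockRows L A) (hL : L ∣ N) :
    HasBlockRows L (kron S A) := by
  obtain ⟨d, rfl⟩ := hL
  intro i
  obtain ⟨a, ha, hSrow⟩ := hS i.divNat
  obtain ⟨c, hc, hArow⟩ := hA i.modNat
  rcases Nat.eq_zero_or_pos L with rfl | hL
  · simp at hc
  rw [Nat.div_one] at ha
  rw [Nat.mul_div_cancel_left _ hL] at hc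
  refine ⟨a * d + c, ?_, fun y => ?_⟩
  · rw [Nat.mul_left_comm, Nat.mul_div_cancel_left _ hL]
    nlinarith
  have hcol : (y : ℕ) / L = a * d + c ↔ (y.divNat : ℕ) = a ∧ (y.modNat : ℕ) / L = c := by
    rw [Fin.coe_divNat, Fin.coe_modNat, Nat.mod_mul_right_div_self, ← Nat.div_div_eq_div_mul,
      Nat.div_mod_unique (by omega), Nat.mul_comm d a]
    omega
  simp only [kron_apply, hSrow, hArow, Nat.div_one, hcol, ite_zero_mul_ite_zero, mul_one]

end HasBlockRows

theorem hasBlockRows_Kmat (m : ℕ) : HasBlockRows 1 (Kmat m) := fun i =>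
  ⟨m - 1 - i, by omega, fun x => by simp [Kmat]⟩

theorem hasBlockRows_one (m : ℕ) : HasBlockRows 1 (1 : Matrix (Fin m) (Fin m) ℤ) := fun i =>
  ⟨i, by simp, fun x => by simp [Matrix.one_apply, eq_comm, Fin.ext_iff]⟩

theorem mul_four_pow_div_mul_two_pow {t : ℕ} (ht : 0 < t) (n : ℕ) :
    t * 4 ^ n / (t * 2 ^ n) = 2 ^ n := by
  rw [four_pow_eq, ← Nat.mul_assoc, Nat.mul_div_cancel_left _ (by positivity)]

theorem Pmat_apply (t n : ℕ) (x y : Fin (t * 4 ^ n)) :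
    Pmat t n x y = if (y : ℕ) / (t * 2 ^ n) = 2 ^ n - 1 - (x : ℕ) / t % 2 ^ n then 1 else 0 := by
  have hy : (y : ℕ) / (t * 2 ^ n) < 2 ^ n :=
    Nat.div_lt_of_lt_mul (by rw [Nat.mul_assoc, ← four_pow_eq]; exact y.isLt)
  simp [Pmat, castM, kron_apply, Jmat, Kmat, Nat.mod_eq_of_lt hy]

theorem hasBlockRows_Pmat {t : ℕ} (ht : 0 < t) (n : ℕ) :
    HasBlockRows (t * 2 ^ n) (Pmat t n) := fun x =>
  ⟨2 ^ n - 1 - (x : ℕ) / t % 2 ^ n, by rw [mul_four_pow_div_mul_two_pow ht]; omega,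
    Pmat_apply t n x⟩

theorem hasBlockRows_Bmat {t v : ℕ} (ht : 0 < t) (B₁ : Matrix (Fin v) (Fin (4 * t)) ℤ)
    (hB₁ : ∀ i : Fin v, ∃ b : Fin 2, ∀ j : Fin (4 * t),
      B₁ i j = if (j : ℕ) / (2 * t) = (b : ℕ) then 1 else 0) :
    ∀ n, HasBlockRows (t * 2 ^ (n + 1)) (Bmat t v B₁ (n + 1))
  | 0 => by
    refine HasBlockRows.castM (fun i => ?_) _ _
    obtain ⟨b, hb⟩ := hB₁ i
    refine ⟨b, ?_, by simpa [Nat.mul_comm] using hb⟩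
    rw [show 4 * t = t * 2 ^ (0 + 1) * 2 by ring, Nat.mul_div_cancel_left _ (by positivity)]
    exact b.isLt
  | n + 1 => by
    have hdvd : t * 2 ^ (n + 1) ∣ t * 4 ^ (n + 1) := by
      rw [four_pow_eq, ← Nat.mul_assoc]; exact Nat.dvd_mul_right _ _
    have hKB := ((hasBlockRows_Kmat 2).kron (hasBlockRows_Bmat ht B₁ hB₁ n) hdvd).kron_Jmat 1
      two_pos
    have hIP := ((hasBlockRows_one 2).kron (hasBlockRows_Pmat ht (n + 1)) hdvd).kron_Jmat 1
      two_pos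
    rw [pow_succ, ← Nat.mul_assoc]
    exact (hKB.vstack hIP).castM _ _

theorem card_filter_div_eq_and_div_mod_eq {t p N c b : ℕ} (ht : 0 < t) (hb : b < p)
    (hN : (c + 1) * (t * p) ≤ N) :
    ((Finset.range N).filter fun x => x / (t * p) = c ∧ x / t % p = b).card = t := by
  have hblock : ∀ x, x / (t * p) = c ∧ x / t % p = b ↔
      (p * c + b) * t ≤ x ∧ x < (p * c + b) * t + t := by
    intro x
    rw [← Nat.div_div_eq_div_mul, Nat.div_mod_unique (by omega), Nat.add_comm b, eq_comm,
      Nat.div_eq_iff ht]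
    omega
  have hfits : (p * c + b) * t + t ≤ N := by nlinarith
  rw [show (Finset.range N).filter _ = Finset.Ico ((p * c + b) * t) ((p * c + b) * t + t) by
    ext x; simp only [Finset.mem_filter, Finset.mem_range, Finset.mem_Ico, hblock]; omega]
  simp

theorem mul_Pmat_of_hasBlockRows {t n r : ℕ} (ht : 0 < t)
    {M : Matrix (Fin r) (Fin (t * 4 ^ n)) ℤ} (hM : HasBlockRows (t * 2 ^ n) M) :
    M * Pmat t n = (t : ℤ) • Jmat r (t * 4 ^ n) := by
  ext i y
  obtain ⟨c, hc, hrow⟩ := hM i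
  have hy : (y : ℕ) / (t * 2 ^ n) < 2 ^ n :=
    Nat.div_lt_of_lt_mul (by rw [Nat.mul_assoc, ← four_pow_eq]; exact y.isLt)
  have hb : 2 ^ n - 1 - (y : ℕ) / (t * 2 ^ n) < 2 ^ n :=
    (Nat.sub_le _ _).trans_lt (Nat.sub_lt (Nat.two_pow_pos n) one_pos)
  have hfits : (c + 1) * (t * 2 ^ n) ≤ t * 4 ^ n := (Nat.le_div_iff_mul_le (by positivity)).1 hc
  calc (M * Pmat t n) i y
      = ∑ x : Fin (t * 4 ^ n), if (x : ℕ) / (t * 2 ^ n) = c ∧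
          (x : ℕ) / t % 2 ^ n = 2 ^ n - 1 - (y : ℕ) / (t * 2 ^ n) then 1 else 0 := by
        simp only [Matrix.mul_apply, hrow, Pmat_apply, ite_zero_mul_ite_zero, mul_one]
        refine Finset.sum_congr rfl fun x _ => if_congr (and_congr_right fun _ => ?_) rfl rfl
        have := Nat.mod_lt ((x : ℕ) / t) (Nat.two_pow_pos n)
        omega
    _ = t := by
        rw [Fin.sum_univ_eq_sum_range (fun x => if x / (t * 2 ^ n) = c ∧
          x / t % 2 ^ n = 2 ^ n - 1 - (y : ℕ) / (t * 2 ^ n) then (1 : ℤ) else 0),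
          Finset.sum_boole, card_filter_div_eq_and_div_mod_eq ht hb hfits]
    _ = ((t : ℤ) • Jmat r (t * 4 ^ n)) i y := by simp [Jmat]

theorem Bmat_mul_Pmat_general
    (t v : ℕ) (ht : 0 < t)
    (B₁ : Matrix (Fin v) (Fin (4 * t)) ℤ)
    (hblockB : ∀ i : Fin v, ∃! b : Fin 2, ∀ j : Fin (4 * t),
      B₁ i j = if (j : ℕ) / (2 * t) = (b : ℕ) then 1 else 0)
    (n : ℕ) (hn : 1 ≤ n) :
    Bmat t v B₁ n * Pmat t n = (t : ℤ) • Jmat (vnum v t n) (t * 4 ^ n) := by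
  obtain ⟨m, rfl⟩ := Nat.exists_eq_add_of_le' hn
  exact mul_Pmat_of_hasBlockRows ht (hasBlockRows_Bmat ht B₁ (fun i => (hblockB i).exists) m)

/-- Equation (13): `B_n · P_n = t · J_{v_n, t·4^n}` where `v_n = (v+(2^{n+1}−4)t)·2^{n−1}`. -/
theorem Bmat_mul_Pmat
    (t v k : ℕ) (ht : 0 < t) (hv : 0 < v) (hk : 0 < k)
    (B₁ : Matrix (Fin v) (Fin (4 * t)) ℤ)
    (hB01 : ∀ i j, B₁ i j = 0 ∨ B₁ i j = 1)
    (hblockB : ∀ i : Fin v, ∃! b : Fin 2, ∀ j : Fin (4 * t),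
      B₁ i j = if (j : ℕ) / (2 * t) = (b : ℕ) then 1 else 0)
    (n : ℕ) (hn : 1 ≤ n) :
    Bmat t v B₁ n * Pmat t n = (t : ℤ) • Jmat (vnum v t n) (t * 4 ^ n) :=
  Bmat_mul_Pmat_general t v ht B₁ hblockB n hn
end
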